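/- Let X be a linear cycle set, A an abelian group, (f,g) a normalised 2-cocycle, E = X ⊕_{f,g} A, and Ψ : Aut_A(E) → Aut(X) × Aut(A) the homomorphism sending ψ(x,a)=(φ(x),λ(x)+θ(a)) to (φ,θ). Then the image of Ψ equals the stabiliser of the cohomology class [f,g] under the action of Aut(X) × Aut(A) on H²_N(X;A). -/

import Mathlib

/-- A (left) linear cycle set on an abelian group `X`. -/
structure LCS (X : Type*) [AddCommGroup X] where
  dot : X → X → X
  bij : ∀ x, Function.Bijective (dot x)
  cyc : ∀ x y z, dot (dot x y) (dot x z) = dot (dot y x) (dot y z)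
  dot_add : ∀ x y z, dot x (y + z) = dot x y + dot x z
  add_dot : ∀ x y z, dot (x + y) z = dot (dot x y) (dot x z)

/-- 2-cocycle conditions for a linear cycle set with coefficients in `A`. -/
def IsCocycle {X A : Type*} [AddCommGroup X] [AddCommGroup A] (L : LCS X)
    (f g : X → X → A) : Prop :=
  (∀ x y, g x y = g y x) ∧
  (∀ x y z, g x y + g (x + y) z = g y z + g x (y + z)) ∧
  (∀ x y z, f (x + y) z = f (L.dot x y) (L.dot x z) + f x z) ∧
  (∀ x y z, f x (y + z) - f x y - f x z = g (L.dot x y) (L.dot x z) - g y z)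

/-- Normalised 2-cocycles, as an additive subgroup of pairs of maps. -/
def Zn {X : Type*} [AddCommGroup X] (L : LCS X) (A : Type*) [AddCommGroup A] :
    AddSubgroup ((X → X → A) × (X → X → A)) where
  carrier := {p | IsCocycle L p.1 p.2 ∧ p.2 0 0 = 0}
  zero_mem' := by
    refine ⟨⟨?_, ?_, ?_, ?_⟩, ?_⟩ <;> intros <;> simp
  add_mem' := by
    rintro p q ⟨⟨hp1, hp2, hp3, hp4⟩, hp5⟩ ⟨⟨hq1, hq2, hq3, hq4⟩, hq5⟩
    refine ⟨⟨?_, ?_, ?_, ?_⟩, ?_⟩ <;> intros <;>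
      simp only [Prod.fst_add, Prod.snd_add, Pi.add_apply]
    · rw [hp1, hq1]
    · rw [show ∀ a b c d : A, a + b + (c + d) = (a + c) + (b + d) by intros; abel,
        hp2, hq2]; abel
    · rw [hp3, hq3]; abel
    · rw [show ∀ a b c d e h : A, a + b - (c + d) - (e + h) = (a - c - e) + (b - d - h)
        by intros; abel, hp4, hq4]; abel
    · rw [hp5, hq5]; simp
  neg_mem' := by
    rintro p ⟨⟨hp1, hp2, hp3, hp4⟩, hp5⟩
    refine ⟨⟨?_, ?_, ?_, ?_⟩, ?_⟩ <;> intros <;>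
      simp only [Prod.fst_neg, Prod.snd_neg, Pi.neg_apply]
    · rw [hp1]
    · rw [show ∀ a b : A, -a + -b = -(a + b) by intros; abel, hp2]; abel
    · rw [hp3]; abel
    · rw [show ∀ a b c : A, -a - -b - -c = -(a - b - c) by intros; abel, hp4]; abel
    · rw [hp5]; simp

/-- Normalised 2-coboundaries. -/
def Bn {X : Type*} [AddCommGroup X] (L : LCS X) (A : Type*) [AddCommGroup A] :
    AddSubgroup ((X → X → A) × (X → X → A)) where
  carrier := {p | ∃ l : X → A, l 0 = 0 ∧ (∀ x y, p.1 x y = l (L.dot x y) - l y) ∧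
      (∀ x y, p.2 x y = l (x + y) - l x - l y)}
  zero_mem' := ⟨0, by simp⟩
  add_mem' := by
    rintro p q ⟨l, hl0, hl1, hl2⟩ ⟨m, hm0, hm1, hm2⟩
    refine ⟨l + m, by simp [hl0, hm0], fun x y => ?_, fun x y => ?_⟩ <;>
      simp only [Prod.fst_add, Prod.snd_add, Pi.add_apply, hl1, hm1, hl2, hm2] <;> abel
  neg_mem' := by
    rintro p ⟨l, hl0, hl1, hl2⟩
    refine ⟨-l, by simp [hl0], fun x y => ?_, fun x y => ?_⟩ <;>
      simp only [Prod.fst_neg, Prod.snd_neg, Pi.neg_apply, hl1, hl2] <;> abel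

/-- The second normalised linear cycle set cohomology group. -/
abbrev H2N {X : Type*} [AddCommGroup X] (L : LCS X) (A : Type*) [AddCommGroup A] :=
  Zn L A ⧸ (Bn L A).addSubgroupOf (Zn L A)

/-- Symmetric group 2-cocycles of the abelian group `X` with trivial coefficients `A`. -/
def Zsym (X : Type*) [AddCommGroup X] (A : Type*) [AddCommGroup A] :
    AddSubgroup (X → X → A) where
  carrier := {g | (∀ x y, g x y = g y x) ∧
      ∀ x y z, g x y + g (x + y) z = g y z + g x (y + z)}
  zero_mem' := by refine ⟨?_, ?_⟩ <;> intros <;> simp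
  add_mem' := by
    rintro p q ⟨hp1, hp2⟩ ⟨hq1, hq2⟩
    refine ⟨?_, ?_⟩ <;> intros <;> simp only [Pi.add_apply]
    · rw [hp1, hq1]
    · rw [show ∀ a b c d : A, a + b + (c + d) = (a + c) + (b + d) by intros; abel,
        hp2, hq2]; abel
  neg_mem' := by
    rintro p ⟨hp1, hp2⟩
    refine ⟨?_, ?_⟩ <;> intros <;> simp only [Pi.neg_apply]
    · rw [hp1]
    · rw [show ∀ a b : A, -a + -b = -(a + b) by intros; abel, hp2]; abel

/-- Symmetric group 2-coboundaries. -/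
def Bsym (X : Type*) [AddCommGroup X] (A : Type*) [AddCommGroup A] :
    AddSubgroup (X → X → A) where
  carrier := {g | ∃ l : X → A, ∀ x y, g x y = l (x + y) - l x - l y}
  zero_mem' := ⟨0, by simp⟩
  add_mem' := by
    rintro p q ⟨l, hl⟩ ⟨m, hm⟩
    exact ⟨l + m, fun x y => by simp only [Pi.add_apply, hl, hm]; abel⟩
  neg_mem' := by
    rintro p ⟨l, hl⟩
    exact ⟨-l, fun x y => by simp only [Pi.neg_apply, hl]; abel⟩

/-- The second symmetric cohomology group of an abelian group. -/
abbrev H2sym (X : Type*) [AddCommGroup X] (A : Type*) [AddCommGroup A] :=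
  Zsym X A ⧸ (Bsym X A).addSubgroupOf (Zsym X A)

/-- The multiplicative group structure on `AddAut M` (composition), as in the older Mathlib. -/
instance addAutGroupOld (M : Type*) [Add M] : Group (AddAut M) where
  mul g h := AddEquiv.trans h g
  one := AddEquiv.refl _
  inv := AddEquiv.symm
  mul_assoc _ _ _ := rfl
  one_mul _ := rfl
  mul_one _ := rfl
  inv_mul_cancel := AddEquiv.self_trans_symm

@[simp]
theorem addAutOld_mul_apply {M : Type*} [Add M] (e₁ e₂ : AddAut M) (m : M) :
    (e₁ * e₂) m = e₁ (e₂ m) :=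
  rfl

@[simp]
theorem addAutOld_one_apply {M : Type*} [Add M] (m : M) : (1 : AddAut M) m = m :=
  rfl

@[simp]
theorem addAutOld_inv_apply {M : Type*} [Add M] (e : AddAut M) (m : M) :
    e⁻¹ m = e.symm m :=
  rfl

/-- Linear cycle set automorphisms, as a subgroup of the additive automorphisms. -/
def LCSAut {X : Type*} [AddCommGroup X] (L : LCS X) : Subgroup (AddAut X) where
  carrier := {φ | ∀ x y, φ (L.dot x y) = L.dot (φ x) (φ y)}
  one_mem' := by intro x y; rfl
  mul_mem' := by
    intro a b ha hb x y
    simp only [addAutOld_mul_apply]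
    rw [hb x y, ha]
  inv_mem' := by
    intro a ha x y
    apply a.injective
    rw [ha]
    simp

/-- The transported pair of maps under a pair of automorphisms. -/
def transport {X A : Type*} [AddCommGroup X] [AddCommGroup A]
    (φ : AddAut X) (θ : AddAut A) (p : (X → X → A) × (X → X → A)) :
    (X → X → A) × (X → X → A) :=
  (fun x y => θ (p.1 (φ⁻¹ x) (φ⁻¹ y)), fun x y => θ (p.2 (φ⁻¹ x) (φ⁻¹ y)))

/-- Addition on the extension `X ⊕_{f,g} A`. -/
def addE {X A : Type*} [AddCommGroup X] [AddCommGroup A] (g : X → X → A)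
    (p q : X × A) : X × A :=
  (p.1 + q.1, p.2 + q.2 + g p.1 q.1)

/-- Cycle set operation on the extension `X ⊕_{f,g} A`. -/
def dotE {X A : Type*} [AddCommGroup X] [AddCommGroup A] (L : LCS X) (f : X → X → A)
    (p q : X × A) : X × A :=
  (L.dot p.1 q.1, q.2 + f p.1 q.1)

/-- Normalised 1-cocycles. -/
def Z1 {X : Type*} [AddCommGroup X] (L : LCS X) (A : Type*) [AddCommGroup A] :
    AddSubgroup (X → A) where
  carrier := {l | (∀ x y, l (x + y) = l x + l y) ∧ ∀ x y, l (L.dot x y) = l y}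
  zero_mem' := by refine ⟨?_, ?_⟩ <;> intros <;> simp
  add_mem' := by
    rintro p q ⟨hp1, hp2⟩ ⟨hq1, hq2⟩
    refine ⟨?_, ?_⟩ <;> intros <;> simp only [Pi.add_apply, hp1, hq1, hp2, hq2] <;> abel
  neg_mem' := by
    rintro p ⟨hp1, hp2⟩
    refine ⟨?_, ?_⟩ <;> intros <;> simp only [Pi.neg_apply, hp1, hp2] <;> abel

/-- Restored from the older Mathlib (no longer present). -/
theorem Equiv.Perm.apply_inv_self {α : Type*} (f : Equiv.Perm α) (x : α) : f (f⁻¹ x) = x :=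
  f.apply_symm_apply x

/-- The subgroup `Aut_A(E)` of the permutation group of `E = X ⊕_{f,g} A`. -/
def AutAE {X A : Type*} [AddCommGroup X] [AddCommGroup A] (L : LCS X)
    (f g : X → X → A) : Subgroup (Equiv.Perm (X × A)) where
  carrier := {ψ | (∀ p q, ψ (addE g p q) = addE g (ψ p) (ψ q)) ∧
      (∀ p q, ψ (dotE L f p q) = dotE L f (ψ p) (ψ q)) ∧
      ∃ φ ∈ LCSAut L, ∃ θ : AddAut A, ∃ l : X → A, ∀ x a, ψ (x, a) = (φ x, l x + θ a)}
  one_mem' := by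
    refine ⟨fun p q => rfl, fun p q => rfl, 1, one_mem _, 1, 0, fun x a => by simp⟩
  mul_mem' := by
    rintro a b ⟨ha1, ha2, φa, hφa, θa, la, ha3⟩ ⟨hb1, hb2, φb, hφb, θb, lb, hb3⟩
    refine ⟨fun p q => ?_, fun p q => ?_, φa * φb, mul_mem hφa hφb, θa * θb,
      fun x => la (φb x) + θa (lb x), fun x a => ?_⟩
    · simp only [Equiv.Perm.mul_apply, hb1, ha1]
    · simp only [Equiv.Perm.mul_apply, hb2, ha2]
    · simp only [Equiv.Perm.mul_apply, hb3, ha3, addAutOld_mul_apply, map_add]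
      abel_nf
  inv_mem' := by
    rintro ψ ⟨h1, h2, φ, hφ, θ, l, h3⟩
    refine ⟨fun p q => ?_, fun p q => ?_, φ⁻¹, inv_mem hφ, θ⁻¹,
      fun x => -θ⁻¹ (l (φ⁻¹ x)), fun x a => ?_⟩
    · apply ψ.injective
      simp only [Equiv.Perm.apply_inv_self, h1, Equiv.Perm.apply_inv_self]
    · apply ψ.injective
      simp only [Equiv.Perm.apply_inv_self, h2, Equiv.Perm.apply_inv_self]
    · apply ψ.injective
      rw [Equiv.Perm.apply_inv_self, h3]
      simp

/-- A predicate packaging the linear cycle set axioms for a pair of binary operations. -/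
structure IsLCSOps {Y : Type*} (add : Y → Y → Y) (dot : Y → Y → Y) : Prop where
  add_assoc : ∀ a b c, add (add a b) c = add a (add b c)
  add_comm : ∀ a b, add a b = add b a
  zero_exists : ∃ e, (∀ a, add e a = a) ∧ ∀ a, ∃ b, add a b = e
  bij : ∀ a, Function.Bijective (dot a)
  cyc : ∀ a b c, dot (dot a b) (dot a c) = dot (dot b a) (dot b c)
  dot_add : ∀ a b c, dot a (add b c) = add (dot a b) (dot a c)
  add_dot : ∀ a b c, dot (add a b) c = dot (dot a b) (dot a c)

/-- The trivial linear cycle set on an abelian group. -/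
def trivLCS (X : Type*) [AddCommGroup X] : LCS X where
  dot := fun _ y => y
  bij := fun _ => Function.bijective_id
  cyc := fun _ _ _ => rfl
  dot_add := fun _ _ _ => rfl
  add_dot := fun _ _ _ => rfl

/-- Exactly the condition for `(x, a) ↦ (φ x, l x + θ a)` to be an automorphism of
`X ⊕_{f,g} A`; it also says that `(f, g) - transport φ θ (f, g)` is the coboundary of `l ∘ φ⁻¹`. -/
def IsCompatibleShear {X A : Type*} [AddCommGroup X] [AddCommGroup A] (L : LCS X)
    (f g : X → X → A) (φ : AddAut X) (θ : AddAut A) (l : X → A) : Prop :=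
  (∀ x y, l (x + y) + θ (g x y) = l x + l y + g (φ x) (φ y)) ∧
  (∀ x y, l (L.dot x y) + θ (f x y) = l y + f (φ x) (φ y))

section Shear

variable {X A : Type*} [AddCommGroup X] [AddCommGroup A] {L : LCS X} {f g : X → X → A}
  {φ : AddAut X} {θ : AddAut A} {l : X → A}

theorem map_addE_iff {ψ : X × A → X × A} (hψ : ∀ x a, ψ (x, a) = (φ x, l x + θ a)) :
    (∀ p q, ψ (addE g p q) = addE g (ψ p) (ψ q)) ↔
      ∀ x y, l (x + y) + θ (g x y) = l x + l y + g (φ x) (φ y) := by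
  constructor
  · intro h x y
    simpa [addE, hψ] using congrArg Prod.snd (h (x, 0) (y, 0))
  · rintro h ⟨x, a⟩ ⟨y, b⟩
    simp only [addE, hψ, map_add, Prod.mk.injEq, true_and]
    linear_combination (norm := abel) h x y

theorem map_dotE_iff (hφ : φ ∈ LCSAut L) {ψ : X × A → X × A}
    (hψ : ∀ x a, ψ (x, a) = (φ x, l x + θ a)) :
    (∀ p q, ψ (dotE L f p q) = dotE L f (ψ p) (ψ q)) ↔
      ∀ x y, l (L.dot x y) + θ (f x y) = l y + f (φ x) (φ y) := by
  constructor
  · intro h x y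
    simpa [dotE, hψ] using congrArg Prod.snd (h (x, 0) (y, 0))
  · rintro h ⟨x, a⟩ ⟨y, b⟩
    simp only [dotE, hψ, map_add, Prod.mk.injEq, hφ x y, true_and]
    linear_combination (norm := abel) h x y

theorem IsCompatibleShear.map_zero (hg : g 0 0 = 0) (h : IsCompatibleShear L f g φ θ l) :
    l 0 = 0 := by
  simpa [hg] using h.1 0 0

theorem exists_mem_AutAE_iff (hφ : φ ∈ LCSAut L) :
    (∃ ψ ∈ AutAE L f g, ∃ l : X → A, ∀ x a, ψ (x, a) = (φ x, l x + θ a)) ↔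
      ∃ l, IsCompatibleShear L f g φ θ l := by
  constructor
  · rintro ⟨ψ, ⟨hadd, hdot, -⟩, l, hψ⟩
    exact ⟨l, (map_addE_iff hψ).1 hadd, (map_dotE_iff hφ hψ).1 hdot⟩
  · rintro ⟨l, hg, hf⟩
    let ψ : Equiv.Perm (X × A) :=
      Equiv.prodShear φ.toEquiv fun x => θ.toEquiv.trans (Equiv.addLeft (l x))
    have hψ : ∀ x a, ψ (x, a) = (φ x, l x + θ a) := fun _ _ => rfl
    exact ⟨ψ, ⟨(map_addE_iff hψ).2 hg, (map_dotE_iff hφ hψ).2 hf, φ, hφ, θ, l, hψ⟩, l, hψ⟩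

theorem neg_transport_add_mem_Bn_iff (hφ : φ ∈ LCSAut L) :
    -transport φ θ (f, g) + (f, g) ∈ Bn L A ↔
      ∃ l, l 0 = 0 ∧ IsCompatibleShear L f g φ θ l := by
  simp only [Bn, AddSubgroup.mem_mk, AddSubmonoid.mem_mk, AddSubsemigroup.mem_mk,
    Set.mem_ofPred_eq, transport, Prod.fst_add, Prod.snd_add, Prod.fst_neg, Prod.snd_neg,
    Pi.add_apply, Pi.neg_apply, addAutOld_inv_apply]
  constructor
  · rintro ⟨m, hm0, hf, hg⟩
    refine ⟨fun x => m (φ x), by simp [hm0], fun x y => ?_, fun x y => ?_⟩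
    · have := hg (φ x) (φ y)
      simp only [← map_add, AddEquiv.symm_apply_apply] at this
      linear_combination (norm := abel) -this
    · have := hf (φ x) (φ y)
      simp only [← hφ x y, AddEquiv.symm_apply_apply] at this
      linear_combination (norm := abel) -this
  · rintro ⟨l, hl0, hg, hf⟩
    refine ⟨fun x => l (φ.symm x), by simp [hl0], fun x y => ?_, fun x y => ?_⟩
    · have hφ' : φ.symm (L.dot x y) = L.dot (φ.symm x) (φ.symm y) := inv_mem hφ x y
      have := hf (φ.symm x) (φ.symm y)
      simp only [AddEquiv.apply_symm_apply] at this
      simp only [hφ']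
      linear_combination (norm := abel) -this
    · have := hg (φ.symm x) (φ.symm y)
      simp only [AddEquiv.apply_symm_apply, ← map_add] at this
      linear_combination (norm := abel) -this

end Shear

theorem image_Psi_eq_stabiliser {X A : Type*} [AddCommGroup X] [AddCommGroup A]
    (L : LCS X) (f g : X → X → A) (hfg : (f, g) ∈ Zn L A)
    (φ : AddAut X) (hφ : φ ∈ LCSAut L) (θ : AddAut A)
    (ht : transport φ θ (f, g) ∈ Zn L A) :
    (∃ ψ ∈ AutAE L f g, ∃ l : X → A, ∀ x a, ψ (x, a) = (φ x, l x + θ a)) ↔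
      (QuotientAddGroup.mk (⟨transport φ θ (f, g), ht⟩ : Zn L A) : H2N L A) =
        QuotientAddGroup.mk (⟨(f, g), hfg⟩ : Zn L A) := by
  rw [exists_mem_AutAE_iff hφ, QuotientAddGroup.eq, AddSubgroup.mem_addSubgroupOf,
    AddSubgroup.coe_add, NegMemClass.coe_neg, neg_transport_add_mem_Bn_iff hφ]
  exact ⟨fun ⟨l, hl⟩ => ⟨l, hl.map_zero hfg.2, hl⟩, fun ⟨l, _, hl⟩ => ⟨l, hl⟩⟩
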